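/- arXiv:1710.10026 — 2 statements merged into one kernel-verified Lean document; each statement's English description precedes it below -/
import Mathlib

section
/- Every strong Markovian coupling is a faithful coupling: let Ω be a finite set, let P be a stochastic matrix on Ω, and let Q be a stochastic matrix on Ω×Ω that is a strong Markovian coupling of P. Then Q is faithful for P, i.e. for all u,v,x ∈ Ω, ∑_{y∈Ω} Q((u,v),(x,y)) = P(u,x), and for all u,v,y ∈ Ω, ∑_{x∈Ω} Q((u,v),(x,y)) = P(v,y). -/
open Finset

/-- A probability distribution on a finite set `Ω`. -/
def IsDist {Ω : Type*} [Fintype Ω] (μ : Ω → ℝ) : Prop :=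
  (∀ x, 0 ≤ μ x) ∧ ∑ x, μ x = 1

/-- A (row-)stochastic matrix on a finite set `Ω`. -/
def IsStoch {Ω : Type*} [Fintype Ω] (P : Ω → Ω → ℝ) : Prop :=
  (∀ x y, 0 ≤ P x y) ∧ ∀ x, ∑ y, P x y = 1

/-- `θ` is a joint distribution (coupling) of `μ` and `ν`. -/
def IsJoint {Ω : Type*} [Fintype Ω] (θ : Ω × Ω → ℝ) (μ ν : Ω → ℝ) : Prop :=
  IsDist θ ∧ (∀ x, ∑ y, θ (x, y) = μ x) ∧ (∀ y, ∑ x, θ (x, y) = ν y)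

/-- Action of a stochastic matrix on a distribution: `(μP)(x) = ∑ u, μ(u) P(u,x)`. -/
def distMul {Ω : Type*} [Fintype Ω] (μ : Ω → ℝ) (P : Ω → Ω → ℝ) : Ω → ℝ :=
  fun x => ∑ u, μ u * P u x

/-- Action of a coupling matrix on a joint distribution. -/
def jointMul {Ω : Type*} [Fintype Ω] (θ : Ω × Ω → ℝ) (Q : Ω × Ω → Ω × Ω → ℝ) :
    Ω × Ω → ℝ :=
  fun p => ∑ w : Ω × Ω, θ w * Q w p

/-- `μ Pⁱ`: iterated application of a stochastic matrix to a distribution. -/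
def distIter {Ω : Type*} [Fintype Ω] (μ : Ω → ℝ) (P : Ω → Ω → ℝ) : ℕ → Ω → ℝ
  | 0 => μ
  | (i + 1) => distMul (distIter μ P i) P

/-- `θ Qⁱ`: iterated application of a coupling matrix to a joint distribution. -/
def jointIter {Ω : Type*} [Fintype Ω] (θ : Ω × Ω → ℝ) (Q : Ω × Ω → Ω × Ω → ℝ) :
    ℕ → Ω × Ω → ℝ
  | 0 => θ
  | (i + 1) => jointMul (jointIter θ Q i) Q

/-- `Q` is a faithful coupling of the chain with transition matrix `P`. -/
def Faithful {Ω : Type*} [Fintype Ω] (Q : Ω × Ω → Ω × Ω → ℝ) (P : Ω → Ω → ℝ) : Prop :=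
  (∀ u v x, ∑ y, Q (u, v) (x, y) = P u x) ∧
  (∀ u v y, ∑ x, Q (u, v) (x, y) = P v y)

/-- `Q` is a strong Markovian coupling of the chain with transition matrix `P`. -/
def StrongMarkovian {Ω : Type*} [Fintype Ω] (Q : Ω × Ω → Ω × Ω → ℝ) (P : Ω → Ω → ℝ) :
    Prop :=
  ∀ μ ν θ, IsDist μ → IsDist ν → IsJoint θ μ ν →
    IsJoint (jointMul θ Q) (distMul μ P) (distMul ν P)

/-- The point mass at `s`. -/
def delta {Ω : Type*} [DecidableEq Ω] (s : Ω) : Ω → ℝ :=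
  fun x => if x = s then 1 else 0

/-- Every strong Markovian coupling is a faithful coupling. -/
theorem strongMarkovian_is_faithful
    {Ω : Type*} [Fintype Ω] (P : Ω → Ω → ℝ) (Q : Ω × Ω → Ω × Ω → ℝ)
    (hP : IsStoch P) (hQ : IsStoch Q)
    (hstrong : StrongMarkovian Q P) :
    Faithful Q P := by
  classical
  have key : ∀ u v : Ω, ∀ p : Ω × Ω, jointMul (delta (u, v)) Q p = Q (u, v) p := by
    intro u v p
    unfold jointMul delta
    rw [Finset.sum_eq_single (u, v)]
    · simp
    · intro b _ hb; simp [hb]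
    · simp
  have hdist : ∀ s : Ω, IsDist (delta s) := by
    intro s
    constructor
    · intro x; unfold delta; split <;> norm_num
    · simp [delta]
  have hjoint : ∀ u v : Ω, IsJoint (delta (u, v)) (delta u) (delta v) := by
    intro u v
    refine ⟨⟨?_, ?_⟩, ?_, ?_⟩
    · intro x; unfold delta; split <;> norm_num
    · simp [delta]
    · intro x
      unfold delta
      by_cases hx : x = u
      · subst hx
        rw [Finset.sum_eq_single v] <;> simp +contextual [Prod.ext_iff]
      · rw [Finset.sum_eq_zero] <;> simp +contextual [Prod.ext_iff, hx]
    · intro y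
      unfold delta
      by_cases hy : y = v
      · subst hy
        rw [Finset.sum_eq_single u] <;> simp +contextual [Prod.ext_iff]
      · rw [Finset.sum_eq_zero] <;> simp +contextual [Prod.ext_iff, hy]
  have hdm : ∀ (s x : Ω), distMul (delta s) P x = P s x := by
    intro s x
    unfold distMul delta
    rw [Finset.sum_eq_single s] <;> simp +contextual
  constructor
  · intro u v x
    have h := (hstrong (delta u) (delta v) (delta (u, v)) (hdist u) (hdist v)
      (hjoint u v)).2.1 x
    rw [hdm] at h
    rw [← h]
    exact Finset.sum_congr rfl fun y _ => (key u v (x, y)).symm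
  · intro u v y
    have h := (hstrong (delta u) (delta v) (delta (u, v)) (hdist u) (hdist v)
      (hjoint u v)).2.2 y
    rw [hdm] at h
    rw [← h]
    exact Finset.sum_congr rfl fun x _ => (key u v (x, y)).symm
end

section
/- A Markov chain coupling is faithful if and only if it is a strong Markovian coupling: let Ω be a finite set, let P be a stochastic matrix on Ω, and let Q be a stochastic matrix on Ω×Ω. Then Q is faithful for P if and only if Q is a strong Markovian coupling of P. -/
open Finset

/-- A Markov chain coupling is faithful iff it is a strong Markovian coupling. -/
theorem faithful_iff_strongMarkovian
    {Ω : Type*} [Fintype Ω] (P : Ω → Ω → ℝ) (Q : Ω × Ω → Ω × Ω → ℝ)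
    (hP : IsStoch P) (hQ : IsStoch Q) :
    Faithful Q P ↔ StrongMarkovian Q P := by
  classical
  constructor
  · rintro ⟨hF1, hF2⟩ μ ν θ hμ hν ⟨⟨hθ0, hθ1⟩, hθx, hθy⟩
    refine ⟨⟨fun p => Finset.sum_nonneg fun w _ =>
        mul_nonneg (hθ0 w) (hQ.1 w p), ?_⟩, ?_, ?_⟩
    · simp only [jointMul]
      rw [Finset.sum_comm]
      calc ∑ w : Ω × Ω, ∑ p : Ω × Ω, θ w * Q w p
          = ∑ w : Ω × Ω, θ w * ∑ p : Ω × Ω, Q w p := by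
            simp [Finset.mul_sum]
        _ = 1 := by simp [hQ.2, hθ1]
    · intro x
      calc ∑ y, jointMul θ Q (x, y)
          = ∑ w : Ω × Ω, θ w * ∑ y, Q w (x, y) := by
            simp only [jointMul]; rw [Finset.sum_comm]; simp [Finset.mul_sum]
        _ = ∑ u, ∑ v, θ (u, v) * P u x := by
            rw [Fintype.sum_prod_type]
            exact Finset.sum_congr rfl fun u _ => Finset.sum_congr rfl fun v _ => by
              rw [hF1 u v x]
        _ = distMul μ P x := by
            simp only [distMul, ← hθx, Finset.sum_mul]
    · intro y
      calc ∑ x, jointMul θ Q (x, y)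
          = ∑ w : Ω × Ω, θ w * ∑ x, Q w (x, y) := by
            simp only [jointMul]; rw [Finset.sum_comm]; simp [Finset.mul_sum]
        _ = ∑ u, ∑ v, θ (u, v) * P v y := by
            rw [Fintype.sum_prod_type]
            exact Finset.sum_congr rfl fun u _ => Finset.sum_congr rfl fun v _ => by
              rw [hF2 u v y]
        _ = distMul ν P y := by
            simp only [distMul, ← hθy]
            rw [Finset.sum_comm]
            simp [Finset.sum_mul]
  · intro hSM
    have key : ∀ u v : Ω, IsJoint (jointMul (delta (u, v)) Q)
        (distMul (delta u) P) (distMul (delta v) P) := by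
      intro u v
      apply hSM
      · exact ⟨fun x => by unfold delta; positivity, by simp [delta]⟩
      · exact ⟨fun x => by unfold delta; positivity, by simp [delta]⟩
      · refine ⟨⟨fun p => by unfold delta; positivity, by simp [delta]⟩, ?_, ?_⟩
        · intro x
          simp only [delta, Prod.mk.injEq]
          by_cases h : x = u
          · subst h; simp
          · simp [h]
        · intro y
          simp only [delta, Prod.mk.injEq]
          by_cases h : y = v
          · subst h; simp
          · simp [h]
    have hjm : ∀ u v (p : Ω × Ω), jointMul (delta (u, v)) Q p = Q (u, v) p := by
      intro u v p
      simp [jointMul, delta, Finset.sum_ite_eq', ite_mul]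
    have hdm : ∀ (s x : Ω), distMul (delta s) P x = P s x := by
      intro s x
      simp [distMul, delta, Finset.sum_ite_eq', ite_mul]
    constructor
    · intro u v x
      have := (key u v).2.1 x
      simpa [hjm, hdm] using this
    · intro u v y
      have := (key u v).2.2 y
      simpa [hjm, hdm] using this
end
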